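/- arXiv:2602.10751 — 5 statements merged into one kernel-verified Lean document; each statement's English description precedes it below -/
import Mathlib

section
/- For 0 < γ < 1 and real non-integer μ, the expected value of the Dalap distribution p(n | μ, γ) = z^{-1} γ^{|n-μ|} on ℤ (with z = (γ^c+γ^f)/(1-γ), f = μ-⌊μ⌋, c = ⌈μ⌉-μ) equals (γ^f/(γ^f+γ^c))·(⌊μ⌋ − γ/(1-γ)) + (γ^c/(γ^f+γ^c))·(⌈μ⌉ + γ/(1-γ)). -/
/-!
Split `ℤ` at `⌊μ⌋`. For `n = ⌊μ⌋ - k` the weight is `γ ^ |n - μ| = γ ^ f * γ ^ k`, and for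
`n = ⌊μ⌋ + 1 + k` it is `γ ^ c * γ ^ k`, so each half of the series is a combination of
`∑ γ ^ k = 1 / (1 - γ)` and `∑ k γ ^ k = γ / (1 - γ) ^ 2`.
-/

theorem HasSum.of_nat_add_of_sub_nat {M : Type*} [AddCommMonoid M] [TopologicalSpace M]
    [ContinuousAdd M] {f : ℤ → M} {a a' : M} (b : ℤ)
    (h₁ : HasSum (fun k : ℕ => f (b + 1 + k)) a) (h₂ : HasSum (fun k : ℕ => f (b - k)) a') :
    HasSum f (a + a') := by
  have h₂' : HasSum (fun k : ℕ => f (b + 1 + -(k + 1))) a' := by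
    convert h₂ using 3; ring
  exact (Equiv.addLeft (b + 1)).hasSum_iff.mp (h₁.of_nat_of_neg_add_one h₂')

theorem hasSum_pow_mul_add_mul {r : ℝ} (hr : |r| < 1) (a s : ℝ) :
    HasSum (fun k : ℕ => r ^ k * (a + s * k)) (a / (1 - r) + s * (r / (1 - r) ^ 2)) := by
  rw [div_eq_mul_inv]
  refine (((hasSum_geometric_of_abs_lt_one hr).mul_left a).add
    ((hasSum_coe_mul_geometric_of_norm_lt_one (r := r) hr).mul_left s)).congr_fun fun k => ?_
  ring

section Dalap

variable {γ : ℝ} (hγ0 : 0 < γ) (hγ1 : γ < 1) (μ : ℝ)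
include hγ0 hγ1

theorem hasSum_rpow_abs_sub_mul_floor_sub :
    HasSum (fun k : ℕ => γ ^ |((⌊μ⌋ - k : ℤ) : ℝ) - μ| * ((⌊μ⌋ - k : ℤ) : ℝ))
      (γ ^ (μ - ⌊μ⌋) * (⌊μ⌋ / (1 - γ) - γ / (1 - γ) ^ 2)) := by
  have hγ : |γ| < 1 := by rwa [abs_of_pos hγ0]
  rw [show (⌊μ⌋ : ℝ) / (1 - γ) - γ / (1 - γ) ^ 2 = ⌊μ⌋ / (1 - γ) + -1 * (γ / (1 - γ) ^ 2) by ring]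
  refine ((hasSum_pow_mul_add_mul hγ _ _).mul_left _).congr_fun fun k => ?_
  have habs : |((⌊μ⌋ - k : ℤ) : ℝ) - μ| = (μ - ⌊μ⌋) + k := by
    push_cast
    rw [abs_of_nonpos (by linarith [Int.floor_le μ, k.cast_nonneg (α := ℝ)])]
    ring
  rw [habs, Real.rpow_add_natCast hγ0.ne']
  push_cast
  ring

theorem hasSum_rpow_abs_sub_mul_floor_add_one_add :
    HasSum (fun k : ℕ => γ ^ |((⌊μ⌋ + 1 + k : ℤ) : ℝ) - μ| * ((⌊μ⌋ + 1 + k : ℤ) : ℝ))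
      (γ ^ (⌊μ⌋ + 1 - μ) * ((⌊μ⌋ + 1) / (1 - γ) + γ / (1 - γ) ^ 2)) := by
  have hγ : |γ| < 1 := by rwa [abs_of_pos hγ0]
  rw [← one_mul (γ / (1 - γ) ^ 2)]
  refine ((hasSum_pow_mul_add_mul hγ _ _).mul_left _).congr_fun fun k => ?_
  have habs : |((⌊μ⌋ + 1 + k : ℤ) : ℝ) - μ| = (⌊μ⌋ + 1 - μ) + k := by
    push_cast
    rw [abs_of_nonneg (by linarith [Int.lt_floor_add_one μ, k.cast_nonneg (α := ℝ)])]
    ring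
  rw [habs, Real.rpow_add_natCast hγ0.ne']
  push_cast
  ring

theorem hasSum_rpow_abs_sub_mul :
    HasSum (fun n : ℤ => γ ^ |(n : ℝ) - μ| * n)
      (γ ^ (⌊μ⌋ + 1 - μ) * ((⌊μ⌋ + 1) / (1 - γ) + γ / (1 - γ) ^ 2)
        + γ ^ (μ - ⌊μ⌋) * (⌊μ⌋ / (1 - γ) - γ / (1 - γ) ^ 2)) :=
  .of_nat_add_of_sub_nat ⌊μ⌋ (hasSum_rpow_abs_sub_mul_floor_add_one_add hγ0 hγ1 μ)
    (hasSum_rpow_abs_sub_mul_floor_sub hγ0 hγ1 μ)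

end Dalap

theorem dalap_expectation_general (γ μ : ℝ) (hγ0 : 0 < γ) (hγ1 : γ < 1)
    (f c : ℝ) (hf : f = μ - ⌊μ⌋) (hc : c = (⌊μ⌋ : ℝ) + 1 - μ) :
    ∑' n : ℤ, ((1 - γ) / (γ ^ f + γ ^ c)) * γ ^ |(n : ℝ) - μ| * (n : ℝ)
      = (γ ^ f / (γ ^ f + γ ^ c)) * ((⌊μ⌋ : ℝ) - γ / (1 - γ))
        + (γ ^ c / (γ ^ f + γ ^ c)) * (((⌊μ⌋ : ℝ) + 1) + γ / (1 - γ)) := by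
  simp_rw [mul_assoc]
  rw [((hasSum_rpow_abs_sub_mul hγ0 hγ1 μ).mul_left _).tsum_eq, ← hf, ← hc]
  have h1γ : 1 - γ ≠ 0 := by linarith
  have hZ : γ ^ f + γ ^ c ≠ 0 := by positivity
  field_simp
  ring

/-- Expected value of the unbounded Dalap distribution for non-integer `μ`:
with `f = μ-⌊μ⌋`, `c = ⌈μ⌉-μ` (where `⌈μ⌉ = ⌊μ⌋+1`), and
`p(n) = ((1-γ)/(γ^f+γ^c)) γ^{|n-μ|}`,
`∑_n p(n)·n = (γ^f/(γ^f+γ^c))·(⌊μ⌋ − γ/(1-γ)) + (γ^c/(γ^f+γ^c))·(⌈μ⌉ + γ/(1-γ))`. -/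
theorem dalap_expectation (γ μ : ℝ) (hγ0 : 0 < γ) (hγ1 : γ < 1)
    (hμ : ∀ m : ℤ, (m : ℝ) ≠ μ)
    (f c : ℝ) (hf : f = μ - ⌊μ⌋) (hc : c = (⌊μ⌋ : ℝ) + 1 - μ) :
    ∑' n : ℤ, ((1 - γ) / (γ ^ f + γ ^ c)) * γ ^ |(n : ℝ) - μ| * (n : ℝ)
      = (γ ^ f / (γ ^ f + γ ^ c)) * ((⌊μ⌋ : ℝ) - γ / (1 - γ))
        + (γ ^ c / (γ ^ f + γ ^ c)) * (((⌊μ⌋ : ℝ) + 1) + γ / (1 - γ)) :=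
  dalap_expectation_general γ μ hγ0 hγ1 f c hf hc
end

section
/- Let μ ∈ ℝ be non-integer with f = μ - ⌊μ⌋ and c = ⌈μ⌉ - μ. The variance of the Dalap distribution p(n|μ,γ) ∝ γ^{|n-μ|} on ℤ converges to 0 as γ → 0⁺ if c ≠ f, and converges to 1/4 if c = f. -/
/-!
With `m = ⌊μ⌋`, the points `n = m + 1 + k` and `n = m - k` (`k : ℕ`) carry the weights
`γ^c γ^k` and `γ^f γ^k`, so the normalized distribution is the mixture, with weights
`q = γ^c / (γ^f + γ^c)` and `1 - q`, of `m + 1 + G` and `m - G` for a geometric variable `G`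
with `P(G = k) = (1 - γ) γ^k`. Hence its variance is
`Var G + q (1 - q) (1 + 2 E G)^2 = γ / (1 - γ)^2 + q (1 - q) ((1 + γ) / (1 - γ))^2`,
which tends to `q₀ (1 - q₀)`, where `q₀ = lim q` is `1` if `c < f`, `0` if `f < c`
and `1/2` if `c = f`.
-/

open Filter Topology

lemma hasSum_sq_mul_geometric {r : ℝ} (hr : ‖r‖ < 1) :
    HasSum (fun k : ℕ => (k : ℝ) ^ 2 * r ^ k) (r * (1 + r) / (1 - r) ^ 3) := by
  have h1r : 1 - r ≠ 0 := sub_ne_zero.mpr (ne_of_lt (lt_of_abs_lt hr)).symm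
  have H := ((hasSum_choose_mul_geometric_of_norm_lt_one 2 hr).mul_left 2).sub
    ((hasSum_choose_mul_geometric_of_norm_lt_one 1 hr).mul_left 3) |>.add
    (hasSum_choose_mul_geometric_of_norm_lt_one 0 hr)
  rw [show r * (1 + r) / (1 - r) ^ 3
      = 2 * (1 / (1 - r) ^ (2 + 1)) - 3 * (1 / (1 - r) ^ (1 + 1)) + 1 / (1 - r) ^ (0 + 1) by
    field_simp; ring]
  refine H.congr_fun fun k => ?_
  simp only [Nat.cast_choose_two, Nat.choose_one_right, Nat.choose_zero_right]
  push_cast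
  ring

section Geometric

variable {r : ℝ} (hr : ‖r‖ < 1) (x s : ℝ)
include hr

lemma hasSum_geometric_mul_affine :
    HasSum (fun k : ℕ => r ^ k * (x + s * k)) (x * (1 - r)⁻¹ + s * (r / (1 - r) ^ 2)) :=
  (((hasSum_geometric_of_norm_lt_one hr).mul_left x).add
    ((hasSum_coe_mul_geometric_of_norm_lt_one hr).mul_left s)).congr_fun fun k => by ring

lemma hasSum_geometric_mul_affine_sq :
    HasSum (fun k : ℕ => r ^ k * (x + s * k) ^ 2)
      (x ^ 2 * (1 - r)⁻¹ + 2 * x * s * (r / (1 - r) ^ 2)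
        + s ^ 2 * (r * (1 + r) / (1 - r) ^ 3)) :=
  ((((hasSum_geometric_of_norm_lt_one hr).mul_left (x ^ 2)).add
    ((hasSum_coe_mul_geometric_of_norm_lt_one hr).mul_left (2 * x * s))).add
    ((hasSum_sq_mul_geometric hr).mul_left (s ^ 2))).congr_fun fun k => by ring

end Geometric

lemma hasSum_rpow_abs_sub_mul_s7 {γ μ : ℝ} (hγ : 0 < γ) {m : ℤ} (hm : (m : ℝ) ≤ μ)
    (hm' : μ < m + 1) {w : ℤ → ℝ} {S T : ℝ}
    (hS : HasSum (fun k : ℕ => γ ^ k * w (m + 1 + k)) S)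
    (hT : HasSum (fun k : ℕ => γ ^ k * w (m - k)) T) :
    HasSum (fun n : ℤ => γ ^ |(n : ℝ) - μ| * w n)
      (γ ^ ((m : ℝ) + 1 - μ) * S + γ ^ (μ - m) * T) := by
  rw [← (Equiv.addRight (m + 1)).hasSum_iff]
  refine HasSum.of_nat_of_neg_add_one ((hS.mul_left _).congr_fun fun k => ?_)
    ((hT.mul_left _).congr_fun fun k => ?_)
  · have hk : |((k + (m + 1) : ℤ) : ℝ) - μ| = ((m : ℝ) + 1 - μ) + k := by
      push_cast
      rw [abs_of_nonneg (by linarith [(k.cast_nonneg : (0 : ℝ) ≤ k)])]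
      ring
    simp only [Function.comp_apply, Equiv.coe_addRight]
    rw [hk, Real.rpow_add_natCast hγ.ne', add_comm (k : ℤ)]
    ring
  · have hk : |((-(k + 1) + (m + 1) : ℤ) : ℝ) - μ| = (μ - m) + k := by
      push_cast
      rw [abs_of_nonpos (by linarith [(k.cast_nonneg : (0 : ℝ) ≤ k)])]
      ring
    simp only [Function.comp_apply, Equiv.coe_addRight]
    rw [hk, Real.rpow_add_natCast hγ.ne', show -((k : ℤ) + 1) + (m + 1) = m - k by ring]
    ring

noncomputable def dalapVariance (μ f c γ : ℝ) : ℝ :=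
  (∑' n : ℤ, ((1 - γ) / (γ ^ f + γ ^ c)) * γ ^ |(n : ℝ) - μ| * (n : ℝ) ^ 2)
    - (∑' n : ℤ, ((1 - γ) / (γ ^ f + γ ^ c)) * γ ^ |(n : ℝ) - μ| * (n : ℝ)) ^ 2

lemma dalapVariance_eq {μ f c γ : ℝ} (hf : f = μ - ⌊μ⌋) (hc : c = (⌊μ⌋ : ℝ) + 1 - μ)
    (hγ0 : 0 < γ) (hγ1 : γ < 1) :
    dalapVariance μ f c γ = γ / (1 - γ) ^ 2
      + γ ^ c / (γ ^ f + γ ^ c) * (1 - γ ^ c / (γ ^ f + γ ^ c)) * ((1 + γ) / (1 - γ)) ^ 2 := by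
  set m := ⌊μ⌋
  have hr : ‖γ‖ < 1 := by rwa [Real.norm_of_nonneg hγ0.le]
  have H1 : HasSum (fun n : ℤ => γ ^ |(n : ℝ) - μ| * n)
      (γ ^ c * ((m + 1) * (1 - γ)⁻¹ + 1 * (γ / (1 - γ) ^ 2))
        + γ ^ f * (m * (1 - γ)⁻¹ + (-1) * (γ / (1 - γ) ^ 2))) := by
    rw [hf, hc]
    refine hasSum_rpow_abs_sub_mul_s7 hγ0 (Int.floor_le μ) (Int.lt_floor_add_one μ)
      ((hasSum_geometric_mul_affine hr _ _).congr_fun fun k => ?_)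
      ((hasSum_geometric_mul_affine hr _ _).congr_fun fun k => ?_) <;>
      push_cast <;> ring
  have H2 : HasSum (fun n : ℤ => γ ^ |(n : ℝ) - μ| * n ^ 2)
      (γ ^ c * ((m + 1) ^ 2 * (1 - γ)⁻¹ + 2 * (m + 1) * 1 * (γ / (1 - γ) ^ 2)
          + 1 ^ 2 * (γ * (1 + γ) / (1 - γ) ^ 3))
        + γ ^ f * (m ^ 2 * (1 - γ)⁻¹ + 2 * m * (-1) * (γ / (1 - γ) ^ 2)
          + (-1) ^ 2 * (γ * (1 + γ) / (1 - γ) ^ 3))) := by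
    rw [hf, hc]
    refine hasSum_rpow_abs_sub_mul_s7 hγ0 (Int.floor_le μ) (Int.lt_floor_add_one μ)
      ((hasSum_geometric_mul_affine_sq hr _ _).congr_fun fun k => ?_)
      ((hasSum_geometric_mul_affine_sq hr _ _).congr_fun fun k => ?_) <;>
      push_cast <;> ring
  set C := (1 - γ) / (γ ^ f + γ ^ c)
  rw [dalapVariance, ((H2.mul_left C).congr_fun fun n => mul_assoc _ _ _).tsum_eq,
    ((H1.mul_left C).congr_fun fun n => mul_assoc _ _ _).tsum_eq]
  have hγ : γ ^ f * γ ^ c = γ := by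
    rw [← Real.rpow_add hγ0, hf, hc]
    norm_num
  have h1γ : 1 - γ ≠ 0 := by linarith
  have hpos : 0 < γ ^ f + γ ^ c := by positivity
  simp only [C]
  -- substituting `γ = γ^f γ^c` turns the claim into a rational identity in `γ^f` and `γ^c`
  rw [← hγ] at h1γ ⊢
  field_simp
  ring

section RpowRatio

variable {f c : ℝ}

lemma tendsto_rpow_div_rpow_add_rpow_of_lt (h : c < f) :
    Tendsto (fun γ : ℝ => γ ^ c / (γ ^ f + γ ^ c)) (𝓝[>] 0) (𝓝 1) := by
  have hfc : 0 < f - c := sub_pos.2 h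
  have h0 : Tendsto (fun γ : ℝ => γ ^ (f - c)) (𝓝[>] 0) (𝓝 0) := by
    simpa [Real.zero_rpow hfc.ne'] using
      (Real.continuousAt_rpow_const 0 (f - c) (Or.inr hfc.le)).tendsto.mono_left
        nhdsWithin_le_nhds
  refine ((h0.add_const 1).inv₀ (by norm_num)).congr' ?_ |>.trans (by norm_num)
  filter_upwards [self_mem_nhdsWithin] with γ (hγ : 0 < γ)
  have hc : 0 < γ ^ c := Real.rpow_pos_of_pos hγ c
  rw [show γ ^ f = γ ^ (f - c) * γ ^ c by rw [← Real.rpow_add hγ, sub_add_cancel]]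
  field_simp

lemma tendsto_rpow_div_rpow_add_rpow_of_gt (h : f < c) :
    Tendsto (fun γ : ℝ => γ ^ c / (γ ^ f + γ ^ c)) (𝓝[>] 0) (𝓝 0) := by
  refine ((tendsto_const_nhds (x := (1 : ℝ))).sub
    (tendsto_rpow_div_rpow_add_rpow_of_lt h)).congr' ?_ |>.trans (by norm_num)
  filter_upwards [self_mem_nhdsWithin] with γ (hγ : 0 < γ)
  have hpos : 0 < γ ^ f + γ ^ c := by positivity
  field_simp
  ring

lemma tendsto_rpow_div_rpow_add_rpow_of_eq (h : c = f) :
    Tendsto (fun γ : ℝ => γ ^ c / (γ ^ f + γ ^ c)) (𝓝[>] 0) (𝓝 (1 / 2)) := by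
  refine tendsto_const_nhds.congr' ?_
  filter_upwards [self_mem_nhdsWithin] with γ (hγ : 0 < γ)
  have hc : 0 < γ ^ c := Real.rpow_pos_of_pos hγ c
  rw [h] at hc ⊢
  field_simp
  norm_num

end RpowRatio

lemma tendsto_dalapVariance {μ f c q₀ : ℝ} (hf : f = μ - ⌊μ⌋) (hc : c = (⌊μ⌋ : ℝ) + 1 - μ)
    (hq : Tendsto (fun γ : ℝ => γ ^ c / (γ ^ f + γ ^ c)) (𝓝[>] 0) (𝓝 q₀)) :
    Tendsto (dalapVariance μ f c) (𝓝[>] 0) (𝓝 (q₀ * (1 - q₀))) := by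
  have hdisp : Tendsto (fun γ : ℝ => γ / (1 - γ) ^ 2) (𝓝[>] 0) (𝓝 0) := by
    have : ContinuousAt (fun γ : ℝ => γ / (1 - γ) ^ 2) 0 := by fun_prop (disch := norm_num)
    simpa using this.tendsto.mono_left nhdsWithin_le_nhds
  have hgap : Tendsto (fun γ : ℝ => (1 + γ) / (1 - γ)) (𝓝[>] 0) (𝓝 1) := by
    have : ContinuousAt (fun γ : ℝ => (1 + γ) / (1 - γ)) 0 := by fun_prop (disch := norm_num)
    simpa using this.tendsto.mono_left nhdsWithin_le_nhds
  have hlim :=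
    hdisp.add ((hq.mul ((tendsto_const_nhds (x := (1 : ℝ))).sub hq)).mul (hgap.pow 2))
  rw [zero_add, one_pow, mul_one] at hlim
  refine hlim.congr' ?_
  filter_upwards [Ioo_mem_nhdsGT one_pos] with γ hγ
  exact (dalapVariance_eq hf hc hγ.1 hγ.2).symm

theorem dalap_variance_limit_general (μ : ℝ)
    (f c : ℝ) (hf : f = μ - ⌊μ⌋) (hc : c = (⌊μ⌋ : ℝ) + 1 - μ) :
    (c ≠ f → Tendsto
      (fun γ : ℝ =>
        (∑' n : ℤ, ((1 - γ) / (γ ^ f + γ ^ c)) * γ ^ |(n : ℝ) - μ| * (n : ℝ) ^ 2)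
        - (∑' n : ℤ, ((1 - γ) / (γ ^ f + γ ^ c)) * γ ^ |(n : ℝ) - μ| * (n : ℝ)) ^ 2)
      (𝓝[>] 0) (𝓝 0)) ∧
    (c = f → Tendsto
      (fun γ : ℝ =>
        (∑' n : ℤ, ((1 - γ) / (γ ^ f + γ ^ c)) * γ ^ |(n : ℝ) - μ| * (n : ℝ) ^ 2)
        - (∑' n : ℤ, ((1 - γ) / (γ ^ f + γ ^ c)) * γ ^ |(n : ℝ) - μ| * (n : ℝ)) ^ 2)
      (𝓝[>] 0) (𝓝 (1 / 4))) := by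
  refine ⟨fun hne => ?_, fun heq => ?_⟩
  · rcases hne.lt_or_gt with h | h
    · exact (tendsto_dalapVariance hf hc (tendsto_rpow_div_rpow_add_rpow_of_lt h)).trans
        (by norm_num)
    · exact (tendsto_dalapVariance hf hc (tendsto_rpow_div_rpow_add_rpow_of_gt h)).trans
        (by norm_num)
  · exact (tendsto_dalapVariance hf hc (tendsto_rpow_div_rpow_add_rpow_of_eq heq)).trans
      (by norm_num)

/-- The variance of the Dalap distribution
`p(n) = ((1-γ)/(γ^f+γ^c)) γ^{|n-μ|}` on ℤ converges to `0` as `γ → 0⁺`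
if `c ≠ f`, and converges to `1/4` if `c = f`, for non-integer `μ`,
`f = μ-⌊μ⌋`, `c = ⌈μ⌉-μ` with `⌈μ⌉ = ⌊μ⌋+1`. -/
theorem dalap_variance_limit (μ : ℝ) (hμ : ∀ m : ℤ, (m : ℝ) ≠ μ)
    (f c : ℝ) (hf : f = μ - ⌊μ⌋) (hc : c = (⌊μ⌋ : ℝ) + 1 - μ) :
    (c ≠ f → Tendsto
      (fun γ : ℝ =>
        (∑' n : ℤ, ((1 - γ) / (γ ^ f + γ ^ c)) * γ ^ |(n : ℝ) - μ| * (n : ℝ) ^ 2)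
        - (∑' n : ℤ, ((1 - γ) / (γ ^ f + γ ^ c)) * γ ^ |(n : ℝ) - μ| * (n : ℝ)) ^ 2)
      (𝓝[>] 0) (𝓝 0)) ∧
    (c = f → Tendsto
      (fun γ : ℝ =>
        (∑' n : ℤ, ((1 - γ) / (γ ^ f + γ ^ c)) * γ ^ |(n : ℝ) - μ| * (n : ℝ) ^ 2)
        - (∑' n : ℤ, ((1 - γ) / (γ ^ f + γ ^ c)) * γ ^ |(n : ℝ) - μ| * (n : ℝ)) ^ 2)
      (𝓝[>] 0) (𝓝 (1 / 4))) :=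
  dalap_variance_limit_general μ f c hf hc
end

section
/- Let μ ∈ ℝ be non-integer with f = μ-⌊μ⌋, c = ⌈μ⌉-μ. As γ → 0⁺, the expected value of the Danorm distribution p(n|μ,γ) ∝ γ^{(n-μ)²} on ℤ converges to r(μ) (the nearest integer to μ) if c ≠ f, and to μ if c = f. -/
/-!
Write `E n = (n - μ)²` and let `a` be its minimum over `ℤ`, attained on a finite set `S`.
Dividing numerator and denominator of the mean by `γ ^ a`, the weights become `γ ^ (E n - a)`,
which tend to `1` on `S` and to `0` off `S` as `γ → 0⁺`; they are dominated by the Gaussian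
weights `e^{-π (E n - a)}` for `γ ≤ e^{-π}`, so by dominated convergence the mean tends to the
average of `n` over `S`. The minimisers are `⌊μ⌋`, `⌊μ⌋ + 1`, or both when `μ` is a half-integer.
-/

open Filter Topology Finset

section Gibbs

variable {ι : Type*}

noncomputable def gibbsMean (E g : ι → ℝ) (γ : ℝ) : ℝ :=
  ∑' i, (γ ^ E i / ∑' j, γ ^ E j) * g i

theorem tendsto_rpow_nhdsGT_zero_of_pos {t : ℝ} (ht : 0 < t) :
    Tendsto (fun γ : ℝ => γ ^ t) (𝓝[>] 0) (𝓝 0) := by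
  simpa [Real.zero_rpow ht.ne'] using
    (Real.continuousAt_rpow_const 0 t (Or.inr ht.le)).tendsto.mono_left nhdsWithin_le_nhds

theorem tendsto_tsum_rpow_mul_nhdsGT_zero {E g : ι → ℝ} {S : Finset ι} {b : ℝ} (hb : 0 < b)
    (hES : ∀ i ∈ S, E i = 0) (hE : ∀ i ∉ S, 0 < E i)
    (hsum : Summable fun i => b ^ E i * |g i|) :
    Tendsto (fun γ : ℝ => ∑' i, γ ^ E i * g i) (𝓝[>] 0) (𝓝 (∑ i ∈ S, g i)) := by
  rw [sum_eq_tsum_indicator]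
  refine tendsto_tsum_of_dominated_convergence hsum (fun i => ?_) ?_
  · by_cases hi : i ∈ S
    · simp [hi, hES i hi]
    · simpa [hi] using (tendsto_rpow_nhdsGT_zero_of_pos (hE i hi)).mul_const (g i)
  · filter_upwards [Ioc_mem_nhdsGT hb] with γ hγ i
    have hEi : 0 ≤ E i := by
      by_cases hi : i ∈ S
      · exact (hES i hi).ge
      · exact (hE i hi).le
    rw [Real.norm_eq_abs, abs_mul, abs_of_nonneg (Real.rpow_nonneg hγ.1.le _)]
    exact mul_le_mul_of_nonneg_right (Real.rpow_le_rpow hγ.1.le hγ.2 hEi) (abs_nonneg _)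

theorem gibbsMean_eq_div {E g : ι → ℝ} {γ : ℝ} (hγ : 0 < γ) (a : ℝ) :
    gibbsMean E g γ = (∑' i, γ ^ (E i - a) * g i) / ∑' i, γ ^ (E i - a) := by
  simp only [gibbsMean, Real.rpow_sub hγ, div_mul_eq_mul_div, tsum_div_const]
  rw [div_div_div_cancel_right₀ (Real.rpow_pos_of_pos hγ a).ne']

theorem tendsto_gibbsMean {E g : ι → ℝ} {S : Finset ι} {a b : ℝ} (hb : 0 < b)
    (hS : S.Nonempty) (hES : ∀ i ∈ S, E i = a) (hE : ∀ i ∉ S, a < E i)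
    (hsum : Summable fun i => b ^ E i) (hsumg : Summable fun i => b ^ E i * |g i|) :
    Tendsto (gibbsMean E g) (𝓝[>] 0) (𝓝 ((∑ i ∈ S, g i) / #S)) := by
  have hES' : ∀ i ∈ S, E i - a = 0 := fun i hi => sub_eq_zero.mpr (hES i hi)
  have hE' : ∀ i ∉ S, 0 < E i - a := fun i hi => sub_pos.mpr (hE i hi)
  have hshift : ∀ h : ι → ℝ, Summable (fun i => b ^ E i * |h i|) →
      Summable fun i => b ^ (E i - a) * |h i| := fun h hh =>
    (hh.div_const (b ^ a)).congr fun i => by rw [Real.rpow_sub hb, div_mul_eq_mul_div]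
  have hnum := tendsto_tsum_rpow_mul_nhdsGT_zero hb hES' hE' (hshift g hsumg)
  have hden := tendsto_tsum_rpow_mul_nhdsGT_zero (g := fun _ => 1) hb hES' hE'
    (hshift _ (by simpa using hsum))
  simp only [mul_one, sum_const, nsmul_one] at hden
  refine (hnum.div hden (Nat.cast_ne_zero.mpr hS.card_ne_zero)).congr' ?_
  filter_upwards [self_mem_nhdsWithin] with γ hγ
  exact (gibbsMean_eq_div hγ a).symm

end Gibbs

open Real

theorem summable_abs_pow_mul_exp_neg_pi_mul_sq_sub (μ : ℝ) (k : ℕ) :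
    Summable fun n : ℤ => |(n : ℝ)| ^ k * rexp (-π * ((n : ℝ) - μ) ^ 2) := by
  have hbound := summable_pow_mul_jacobiTheta₂_term_bound |μ| one_pos k
  simp only [Int.cast_abs, one_mul] at hbound
  refine hbound.of_nonneg_of_le (fun n => by positivity) fun n => ?_
  have hμn : μ * n ≤ |μ| * |(n : ℝ)| := by rw [← abs_mul]; exact le_abs_self _
  have hsq : (n : ℝ) ^ 2 - 2 * |μ| * |(n : ℝ)| ≤ ((n : ℝ) - μ) ^ 2 := by nlinarith [sq_nonneg μ]
  gcongr ?_ * rexp ?_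
  exact mul_le_mul_of_nonpos_left hsq (neg_nonpos.mpr pi_pos.le)

noncomputable def danormMean (μ γ : ℝ) : ℝ :=
  gibbsMean (fun n : ℤ => ((n : ℝ) - μ) ^ 2) (fun n => (n : ℝ)) γ

theorem tendsto_danormMean {μ a : ℝ} {S : Finset ℤ} (hS : S.Nonempty)
    (hES : ∀ n ∈ S, ((n : ℝ) - μ) ^ 2 = a) (hE : ∀ n ∉ S, a < ((n : ℝ) - μ) ^ 2) :
    Tendsto (danormMean μ) (𝓝[>] 0) (𝓝 ((∑ n ∈ S, (n : ℝ)) / #S)) := by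
  refine tendsto_gibbsMean (exp_pos (-π)) hS hES hE ?_ ?_
  · simpa [← exp_mul] using summable_abs_pow_mul_exp_neg_pi_mul_sq_sub μ 0
  · simpa [← exp_mul, mul_comm] using summable_abs_pow_mul_exp_neg_pi_mul_sq_sub μ 1

theorem one_le_sq_intCast_sub {μ : ℝ} {n : ℤ} (h₀ : n ≠ ⌊μ⌋) (h₁ : n ≠ ⌊μ⌋ + 1) :
    1 ≤ ((n : ℝ) - μ) ^ 2 := by
  have hfloor := Int.floor_le μ
  have hceil := Int.lt_floor_add_one μ
  rcases lt_or_gt_of_ne h₀ with hn | hn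
  · have : (n : ℝ) + 1 ≤ ⌊μ⌋ := by exact_mod_cast hn
    nlinarith
  · have : (⌊μ⌋ : ℝ) + 2 ≤ n := by exact_mod_cast (show ⌊μ⌋ + 2 ≤ n by omega)
    nlinarith

theorem tendsto_danormMean_floor {μ : ℝ} (h : μ - ⌊μ⌋ < ⌊μ⌋ + 1 - μ) :
    Tendsto (danormMean μ) (𝓝[>] 0) (𝓝 ⌊μ⌋) := by
  have hfloor := Int.floor_le μ
  have hlim := tendsto_danormMean (μ := μ) (a := (μ - ⌊μ⌋) ^ 2) (singleton_nonempty ⌊μ⌋)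
    (by simp only [mem_singleton, forall_eq]; ring) fun n hn => ?_
  · simpa using hlim
  rw [mem_singleton] at hn
  by_cases h₁ : n = ⌊μ⌋ + 1
  · subst h₁
    push_cast
    nlinarith
  · nlinarith [one_le_sq_intCast_sub hn h₁]

theorem tendsto_danormMean_floor_add_one {μ : ℝ} (h : ⌊μ⌋ + 1 - μ < μ - ⌊μ⌋) :
    Tendsto (danormMean μ) (𝓝[>] 0) (𝓝 (⌊μ⌋ + 1)) := by
  have hceil := Int.lt_floor_add_one μ
  have hlim := tendsto_danormMean (μ := μ) (a := (⌊μ⌋ + 1 - μ) ^ 2)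
    (singleton_nonempty (⌊μ⌋ + 1)) (by simp only [mem_singleton, forall_eq]; push_cast; ring)
    fun n hn => ?_
  · simpa using hlim
  rw [mem_singleton] at hn
  by_cases h₀ : n = ⌊μ⌋
  · subst h₀
    nlinarith
  · nlinarith [one_le_sq_intCast_sub h₀ hn]

theorem tendsto_danormMean_of_eq {μ : ℝ} (h : μ - ⌊μ⌋ = ⌊μ⌋ + 1 - μ) :
    Tendsto (danormMean μ) (𝓝[>] 0) (𝓝 μ) := by
  have hlim := tendsto_danormMean (μ := μ) (a := 1 / 4) (S := {⌊μ⌋, ⌊μ⌋ + 1})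
    (insert_nonempty _ _) (fun n hn => ?_) fun n hn => ?_
  · convert hlim using 2
    rw [sum_pair (by omega), card_pair (by omega)]
    push_cast
    linarith
  · rcases mem_insert.mp hn with rfl | hn
    · nlinarith
    rw [mem_singleton.mp hn]
    push_cast
    nlinarith
  · simp only [mem_insert, mem_singleton, not_or] at hn
    linarith [one_le_sq_intCast_sub hn.1 hn.2]

theorem danorm_expectation_limit_general (μ : ℝ)
    (f c : ℝ) (hf : f = μ - ⌊μ⌋) (hc : c = (⌊μ⌋ : ℝ) + 1 - μ) :
    (c ≠ f → Tendsto
      (fun γ : ℝ => ∑' n : ℤ,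
        (γ ^ (((n : ℝ) - μ) ^ 2) / ∑' m : ℤ, γ ^ (((m : ℝ) - μ) ^ 2)) * (n : ℝ))
      (𝓝[>] 0) (𝓝 (if f < c then (⌊μ⌋ : ℝ) else (⌊μ⌋ : ℝ) + 1))) ∧
    (c = f → Tendsto
      (fun γ : ℝ => ∑' n : ℤ,
        (γ ^ (((n : ℝ) - μ) ^ 2) / ∑' m : ℤ, γ ^ (((m : ℝ) - μ) ^ 2)) * (n : ℝ))
      (𝓝[>] 0) (𝓝 μ)) := by
  subst hf hc
  refine ⟨fun hne => ?_, fun heq => tendsto_danormMean_of_eq heq.symm⟩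
  split_ifs with hlt
  · exact tendsto_danormMean_floor hlt
  · exact tendsto_danormMean_floor_add_one (lt_of_le_of_ne (not_lt.mp hlt) hne)

/-- As `γ → 0⁺`, the expected value of the Danorm distribution
`p(n) = γ^{(n-μ)²} / ∑_{m∈ℤ} γ^{(m-μ)²}` on ℤ converges to the nearest
integer `r(μ)` if `c ≠ f`, and to `μ` if `c = f`, for non-integer `μ`,
`f = μ-⌊μ⌋`, `c = ⌈μ⌉-μ` with `⌈μ⌉ = ⌊μ⌋+1`, and `r(μ) = ⌊μ⌋` if `f < c`,
`r(μ) = ⌈μ⌉` if `f > c`. -/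
theorem danorm_expectation_limit (μ : ℝ) (hμ : ∀ m : ℤ, (m : ℝ) ≠ μ)
    (f c : ℝ) (hf : f = μ - ⌊μ⌋) (hc : c = (⌊μ⌋ : ℝ) + 1 - μ) :
    (c ≠ f → Tendsto
      (fun γ : ℝ => ∑' n : ℤ,
        (γ ^ (((n : ℝ) - μ) ^ 2) / ∑' m : ℤ, γ ^ (((m : ℝ) - μ) ^ 2)) * (n : ℝ))
      (𝓝[>] 0) (𝓝 (if f < c then (⌊μ⌋ : ℝ) else (⌊μ⌋ : ℝ) + 1))) ∧
    (c = f → Tendsto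
      (fun γ : ℝ => ∑' n : ℤ,
        (γ ^ (((n : ℝ) - μ) ^ 2) / ∑' m : ℤ, γ ^ (((m : ℝ) - μ) ^ 2)) * (n : ℝ))
      (𝓝[>] 0) (𝓝 μ)) :=
  danorm_expectation_limit_general μ f c hf hc
end

section
/- Let μ ∈ ℝ be non-integer with f = μ-⌊μ⌋, c = ⌈μ⌉-μ. For 0 < γ < 1, consider the Danorm distribution p(n) ∝ γ^{(n-μ)²}. As γ → 0⁺, the probability of n = ⌈μ⌉ + i (i ≥ 1) tends to 0, and p(⌊μ⌋)/(p(⌊μ⌋)+p(⌈μ⌉)) → 1 if f < c, → 1/2 if f = c, → 0 if f > c. -/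
open Filter Topology

private lemma aux_rpow_tendsto {p : ℝ} (hp : 0 < p) :
    Tendsto (fun γ : ℝ => γ ^ p) (𝓝[>] (0:ℝ)) (𝓝 0) := by
  have h := (Real.continuousAt_rpow_const 0 p (Or.inr hp.le)).tendsto
  rw [Real.zero_rpow hp.ne'] at h
  exact h.mono_left nhdsWithin_le_nhds

/-- For the Danorm distribution `p(n) = γ^{(n-μ)²}/Z` with non-integer `μ`,
`f = μ-⌊μ⌋`, `c = ⌈μ⌉-μ` (`⌈μ⌉ = ⌊μ⌋+1`): the probability of `n = ⌈μ⌉ + i`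
for `i ≥ 1` tends to `0` as `γ → 0⁺`, and the ratio
`p(⌊μ⌋)/(p(⌊μ⌋)+p(⌈μ⌉)) = γ^{f²}/(γ^{f²}+γ^{c²})` tends to `1` if `f < c`
(i.e. `f² < c²`), to `1/2` if `f = c`, and to `0` if `f > c` (i.e. `f² > c²`). -/
theorem danorm_neighbor_probabilities (μ : ℝ) (hμ : ∀ m : ℤ, (m : ℝ) ≠ μ)
    (f c : ℝ) (hf : f = μ - ⌊μ⌋) (hc : c = (⌊μ⌋ : ℝ) + 1 - μ) :
    (∀ i : ℕ, 1 ≤ i → Tendsto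
      (fun γ : ℝ =>
        γ ^ (((((⌊μ⌋ + 1 + (i : ℤ)) : ℤ) : ℝ) - μ) ^ 2)
          / ∑' m : ℤ, γ ^ (((m : ℝ) - μ) ^ 2))
      (𝓝[>] 0) (𝓝 0)) ∧
    (f < c → Tendsto
      (fun γ : ℝ => γ ^ (f ^ 2) / (γ ^ (f ^ 2) + γ ^ (c ^ 2)))
      (𝓝[>] 0) (𝓝 1)) ∧
    (f = c → Tendsto
      (fun γ : ℝ => γ ^ (f ^ 2) / (γ ^ (f ^ 2) + γ ^ (c ^ 2)))
      (𝓝[>] 0) (𝓝 (1 / 2))) ∧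
    (c < f → Tendsto
      (fun γ : ℝ => γ ^ (f ^ 2) / (γ ^ (f ^ 2) + γ ^ (c ^ 2)))
      (𝓝[>] 0) (𝓝 0)) := by
  have hfl : (⌊μ⌋ : ℝ) < μ := lt_of_le_of_ne (Int.floor_le μ) (hμ ⌊μ⌋)
  have hfu : μ < (⌊μ⌋ : ℝ) + 1 := Int.lt_floor_add_one μ
  have hf0 : 0 < f := by rw [hf]; linarith
  have hf1 : f < 1 := by rw [hf]; linarith
  have hc0 : 0 < c := by rw [hc]; linarith
  refine ⟨?_, ?_, ?_, ?_⟩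
  · intro i hi
    set b : ℝ := (((⌊μ⌋ + 1 + (i : ℤ)) : ℤ) : ℝ) - μ with hb
    have hb' : b = c + i := by rw [hb, hc]; push_cast; ring
    have hbi : f < b := by
      have : (1:ℝ) ≤ i := by exact_mod_cast hi
      rw [hb']; linarith
    have hE : 0 < b ^ 2 - f ^ 2 := by
      have := pow_lt_pow_left₀ hbi hf0.le two_ne_zero
      linarith
    apply squeeze_zero' (g := fun γ : ℝ => γ ^ (b ^ 2 - f ^ 2))
    · filter_upwards [self_mem_nhdsWithin] with γ (hγ : (0:ℝ) < γ)
      exact div_nonneg (Real.rpow_nonneg hγ.le _)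
        (tsum_nonneg fun m => Real.rpow_nonneg hγ.le _)
    · filter_upwards [self_mem_nhdsWithin] with γ (hγ : (0:ℝ) < γ)
      by_cases hs : Summable (fun m : ℤ => γ ^ (((m : ℝ) - μ) ^ 2))
      · have hfloor : (((⌊μ⌋ : ℤ) : ℝ) - μ) ^ 2 = f ^ 2 := by rw [hf]; ring
        have hle : γ ^ (f ^ 2) ≤ ∑' m : ℤ, γ ^ (((m : ℝ) - μ) ^ 2) := by
          have := Summable.le_tsum hs ⌊μ⌋ (fun m _ => Real.rpow_nonneg hγ.le _)
          rwa [hfloor] at this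
        calc γ ^ (b ^ 2) / ∑' m : ℤ, γ ^ (((m : ℝ) - μ) ^ 2)
            ≤ γ ^ (b ^ 2) / γ ^ (f ^ 2) := by
              apply div_le_div_of_nonneg_left (Real.rpow_nonneg hγ.le _)
                (Real.rpow_pos_of_pos hγ _) hle
          _ = γ ^ (b ^ 2 - f ^ 2) := by
              rw [Real.rpow_sub hγ]
      · rw [tsum_eq_zero_of_not_summable hs, div_zero]
        positivity
    · exact aux_rpow_tendsto hE
  · intro hfc
    have hp : 0 < c ^ 2 - f ^ 2 := by
      have := pow_lt_pow_left₀ hfc hf0.le two_ne_zero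
      linarith
    have h1 : Tendsto (fun γ : ℝ => 1 / (1 + γ ^ (c ^ 2 - f ^ 2)))
        (𝓝[>] (0:ℝ)) (𝓝 1) := by
      have h2 : Tendsto (fun γ : ℝ => 1 + γ ^ (c ^ 2 - f ^ 2)) (𝓝[>] (0:ℝ))
          (𝓝 (1:ℝ)) := by
        have := (tendsto_const_nhds (x := (1:ℝ))).add (aux_rpow_tendsto hp)
        simpa using this
      have h3 := (tendsto_const_nhds (x := (1:ℝ))).div h2 one_ne_zero
      rw [one_div_one] at h3
      exact h3
    refine h1.congr' ?_
    filter_upwards [self_mem_nhdsWithin] with γ (hγ : (0:ℝ) < γ)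
    have hne : γ ^ (f ^ 2) ≠ 0 := (Real.rpow_pos_of_pos hγ _).ne'
    have hsplit : γ ^ (c ^ 2) = γ ^ (f ^ 2) * γ ^ (c ^ 2 - f ^ 2) := by
      rw [← Real.rpow_add hγ]; ring_nf
    rw [hsplit, ← mul_one_add, eq_div_iff]
    · field_simp
    · intro h
      rw [mul_eq_zero] at h
      rcases h with h | h
      · exact hne h
      · have : (0:ℝ) ≤ γ ^ (c ^ 2 - f ^ 2) := Real.rpow_nonneg hγ.le _
        linarith
  · intro hfc
    refine Tendsto.congr' ?_ (tendsto_const_nhds (α := ℝ) (x := (1/2 : ℝ)))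
    filter_upwards [self_mem_nhdsWithin] with γ (hγ : (0:ℝ) < γ)
    have hne : γ ^ (f ^ 2) ≠ 0 := (Real.rpow_pos_of_pos hγ _).ne'
    rw [← hfc]
    field_simp
    norm_num
  · intro hcf
    have hq : 0 < f ^ 2 - c ^ 2 := by
      have := pow_lt_pow_left₀ hcf hc0.le two_ne_zero
      linarith
    have h1 : Tendsto (fun γ : ℝ => γ ^ (f ^ 2 - c ^ 2) / (γ ^ (f ^ 2 - c ^ 2) + 1))
        (𝓝[>] (0:ℝ)) (𝓝 0) := by
      have h2 : Tendsto (fun γ : ℝ => γ ^ (f ^ 2 - c ^ 2) + 1) (𝓝[>] (0:ℝ))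
          (𝓝 (1:ℝ)) := by
        have := (aux_rpow_tendsto hq).add (tendsto_const_nhds (x := (1:ℝ)))
        simpa using this
      have h4 := (aux_rpow_tendsto hq).div h2 one_ne_zero
      rw [zero_div] at h4
      exact h4
    refine h1.congr' ?_
    filter_upwards [self_mem_nhdsWithin] with γ (hγ : (0:ℝ) < γ)
    have hne : γ ^ (c ^ 2) ≠ 0 := (Real.rpow_pos_of_pos hγ _).ne'
    have hsplit : γ ^ (f ^ 2) = γ ^ (c ^ 2) * γ ^ (f ^ 2 - c ^ 2) := by
      rw [← Real.rpow_add hγ]; ring_nf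
    rw [hsplit]
    field_simp
end

section
/- The variance of the Danorm distribution p(n|μ,γ) ∝ γ^{(n-μ)²} on ℤ converges to 0 as γ → 0⁺ whenever μ is not exactly a half-integer; if μ - ⌊μ⌋ = 1/2 the variance converges to 1/4. -/
open Filter Topology

private lemma nat_summable (c : ℝ) (hc0 : 0 < c) (hc1 : c < 1) (a : ℝ) :
    Summable (fun n : ℕ => ((n : ℝ) ^ 2 + 1) * c ^ (((n : ℝ) + a) ^ 2)) := by
  set C : ℝ := (2 * a - 1) ^ 2 / 4 with hC
  have key : ∀ n : ℕ, (n : ℝ) - C ≤ ((n : ℝ) + a) ^ 2 := by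
    intro n
    nlinarith [sq_nonneg ((n : ℝ) + (2 * a - 1) / 2), sq_nonneg a]
  have hb : Summable (fun n : ℕ => c ^ (-C) * (((n : ℝ) ^ 2 + 1) * c ^ n)) := by
    apply Summable.mul_left
    have h1 : Summable (fun n : ℕ => (n : ℝ) ^ 2 * c ^ n) :=
      summable_pow_mul_geometric_of_norm_lt_one 2 (by rwa [Real.norm_eq_abs, abs_of_pos hc0])
    have h2 : Summable (fun n : ℕ => (c : ℝ) ^ n) :=
      summable_geometric_of_lt_one hc0.le hc1
    simpa [add_mul, one_mul] using h1.add h2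
  apply Summable.of_nonneg_of_le (fun n => by positivity) _ hb
  intro n
  have h1 : c ^ (((n : ℝ) + a) ^ 2) ≤ c ^ ((n : ℝ) - C) :=
    Real.rpow_le_rpow_of_exponent_ge hc0 hc1.le (key n)
  have h2 : c ^ ((n : ℝ) - C) = c ^ (-C) * c ^ n := by
    rw [sub_eq_add_neg, Real.rpow_add hc0, mul_comm, Real.rpow_natCast]
  calc ((n : ℝ) ^ 2 + 1) * c ^ (((n : ℝ) + a) ^ 2)
      ≤ ((n : ℝ) ^ 2 + 1) * c ^ ((n : ℝ) - C) := by
        apply mul_le_mul_of_nonneg_left h1 (by positivity)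
    _ = c ^ (-C) * (((n : ℝ) ^ 2 + 1) * c ^ n) := by rw [h2]; ring

private lemma summable_master (c μ : ℝ) (hc0 : 0 < c) (hc1 : c < 1) :
    Summable (fun n : ℤ => ((n : ℝ) ^ 2 + 1) * c ^ (((n : ℝ) - μ) ^ 2)) := by
  apply Summable.of_nat_of_neg_add_one
  · simpa [sub_eq_add_neg] using nat_summable c hc0 hc1 (-μ)
  · have h := (nat_summable c hc0 hc1 (1 + μ)).mul_left 3
    apply Summable.of_nonneg_of_le (fun n => by positivity) _ h
    intro n
    push_cast
    have e1 : (-((n:ℝ) + 1) - μ) ^ 2 = ((n : ℝ) + (1 + μ)) ^ 2 := by ring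
    rw [e1]
    have : (-((n:ℝ) + 1)) ^ 2 + 1 ≤ 3 * ((n : ℝ) ^ 2 + 1) := by nlinarith [sq_nonneg (n:ℝ), sq_nonneg ((n:ℝ)-1)]
    have hp : (0:ℝ) ≤ c ^ (((n : ℝ) + (1 + μ)) ^ 2) := by positivity
    nlinarith [mul_le_mul_of_nonneg_right this hp]

private lemma tendsto_part (μ e : ℝ) (he : ∀ n : ℤ, e ≤ ((n : ℝ) - μ) ^ 2)
    (w : ℤ → ℝ) (hw : ∀ n : ℤ, |w n| ≤ (n : ℝ) ^ 2 + 1) :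
    Tendsto (fun γ : ℝ => ∑' n : ℤ, γ ^ (((n : ℝ) - μ) ^ 2 - e) * w n) (𝓝[>] (0 : ℝ))
      (𝓝 (∑' n : ℤ, if ((n : ℝ) - μ) ^ 2 = e then w n else 0)) := by
  apply tendsto_tsum_of_dominated_convergence
    (bound := fun n : ℤ => ((n : ℝ) ^ 2 + 1) * (1 / 2 : ℝ) ^ (((n : ℝ) - μ) ^ 2) / (1 / 2 : ℝ) ^ e)
  · exact (summable_master (1 / 2) μ (by norm_num) (by norm_num)).div_const _
  · intro n
    by_cases h : ((n : ℝ) - μ) ^ 2 = e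
    · simp only [h, sub_self, if_pos, Real.rpow_zero, one_mul]
      exact tendsto_const_nhds
    · simp only [if_neg h]
      have hc : 0 < ((n : ℝ) - μ) ^ 2 - e := sub_pos.mpr (lt_of_le_of_ne (he n) (Ne.symm h))
      have h1 := (Real.continuousAt_rpow_const 0 _ (Or.inr hc.le)).tendsto
      rw [Real.zero_rpow hc.ne'] at h1
      have h2 := (h1.mul_const (w n)).mono_left (nhdsWithin_le_nhds (s := Set.Ioi 0))
      simpa using h2
  · filter_upwards [Ioc_mem_nhdsGT_of_mem (by norm_num : (0 : ℝ) ∈ Set.Ico 0 (1 / 2))] with γ hγ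
    intro n
    have hq : 0 ≤ ((n : ℝ) - μ) ^ 2 - e := sub_nonneg.mpr (he n)
    have h1 : γ ^ (((n : ℝ) - μ) ^ 2 - e) ≤ (1 / 2 : ℝ) ^ (((n : ℝ) - μ) ^ 2 - e) :=
      Real.rpow_le_rpow hγ.1.le hγ.2 hq
    have h2 : (1 / 2 : ℝ) ^ (((n : ℝ) - μ) ^ 2 - e)
        = (1 / 2 : ℝ) ^ (((n : ℝ) - μ) ^ 2) / (1 / 2 : ℝ) ^ e :=
      Real.rpow_sub (by norm_num) _ _
    have h3 : (0 : ℝ) ≤ γ ^ (((n : ℝ) - μ) ^ 2 - e) := Real.rpow_nonneg hγ.1.le _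
    rw [norm_mul, Real.norm_eq_abs, Real.norm_eq_abs, abs_of_nonneg h3]
    calc γ ^ (((n : ℝ) - μ) ^ 2 - e) * |w n|
        ≤ (1 / 2 : ℝ) ^ (((n : ℝ) - μ) ^ 2 - e) * ((n : ℝ) ^ 2 + 1) :=
          mul_le_mul h1 (hw n) (abs_nonneg _) (Real.rpow_nonneg (by norm_num) _)
      _ = ((n : ℝ) ^ 2 + 1) * (1 / 2 : ℝ) ^ (((n : ℝ) - μ) ^ 2) / (1 / 2 : ℝ) ^ e := by
          rw [h2]; ring

private lemma key (μ e : ℝ) (he : ∀ n : ℤ, e ≤ ((n : ℝ) - μ) ^ 2)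
    (s0 s1 s2 : ℝ) (hs0 : 0 < s0)
    (h0 : HasSum (fun n : ℤ => if ((n : ℝ) - μ) ^ 2 = e then (1 : ℝ) else 0) s0)
    (h1 : HasSum (fun n : ℤ => if ((n : ℝ) - μ) ^ 2 = e then ((n : ℝ)) else 0) s1)
    (h2 : HasSum (fun n : ℤ => if ((n : ℝ) - μ) ^ 2 = e then ((n : ℝ) ^ 2) else 0) s2) :
    Tendsto
      (fun γ : ℝ =>
        (∑' n : ℤ,
          (γ ^ (((n : ℝ) - μ) ^ 2) / ∑' m : ℤ, γ ^ (((m : ℝ) - μ) ^ 2)) * (n : ℝ) ^ 2)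
        - (∑' n : ℤ,
          (γ ^ (((n : ℝ) - μ) ^ 2) / ∑' m : ℤ, γ ^ (((m : ℝ) - μ) ^ 2)) * (n : ℝ)) ^ 2)
      (𝓝[>] 0) (𝓝 (s2 / s0 - (s1 / s0) ^ 2)) := by
  have hB := tendsto_part μ e he (fun _ => (1 : ℝ)) (fun n => by
    rw [abs_one]; nlinarith [sq_nonneg (n : ℝ)])
  have hC := tendsto_part μ e he (fun n => (n : ℝ)) (fun n => by
    nlinarith [sq_nonneg (|(n : ℝ)| - 1), abs_nonneg (n : ℝ), sq_abs (n : ℝ)])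
  have hA := tendsto_part μ e he (fun n => (n : ℝ) ^ 2) (fun n => by
    rw [abs_of_nonneg (sq_nonneg _)]; show ((n : ℝ)) ^ 2 ≤ (n : ℝ) ^ 2 + 1; linarith)
  rw [h0.tsum_eq] at hB
  rw [h1.tsum_eq] at hC
  rw [h2.tsum_eq] at hA
  have hcomb := (hA.div hB hs0.ne').sub ((hC.div hB hs0.ne').pow 2)
  apply hcomb.congr'
  filter_upwards [Ioo_mem_nhdsGT_of_mem (by norm_num : (0 : ℝ) ∈ Set.Ico 0 1)] with γ hγ
  have hγ0 : 0 < γ := hγ.1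
  have hge : (0 : ℝ) < γ ^ e := Real.rpow_pos_of_pos hγ0 e
  have hsplit : ∀ n : ℤ, γ ^ (((n : ℝ) - μ) ^ 2)
      = γ ^ e * γ ^ (((n : ℝ) - μ) ^ 2 - e) := by
    intro n
    rw [← Real.rpow_add hγ0]
    ring_nf
  have aux : ∀ w : ℤ → ℝ,
      (∑' n : ℤ, (γ ^ (((n : ℝ) - μ) ^ 2) / ∑' m : ℤ, γ ^ (((m : ℝ) - μ) ^ 2)) * w n)
      = (∑' n : ℤ, γ ^ (((n : ℝ) - μ) ^ 2 - e) * w n)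
        / (∑' n : ℤ, γ ^ (((n : ℝ) - μ) ^ 2 - e) * 1) := by
    intro w
    have hD : (∑' m : ℤ, γ ^ (((m : ℝ) - μ) ^ 2))
        = γ ^ e * ∑' n : ℤ, γ ^ (((n : ℝ) - μ) ^ 2 - e) * 1 := by
      rw [← tsum_mul_left]
      exact tsum_congr fun n => by rw [hsplit n, mul_one]
    calc (∑' n : ℤ, (γ ^ (((n : ℝ) - μ) ^ 2) / ∑' m : ℤ, γ ^ (((m : ℝ) - μ) ^ 2)) * w n)
        = ∑' n : ℤ, (γ ^ e * (γ ^ (((n : ℝ) - μ) ^ 2 - e) * w n))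
            / (∑' m : ℤ, γ ^ (((m : ℝ) - μ) ^ 2)) := by
          exact tsum_congr fun n => by rw [div_mul_eq_mul_div, hsplit n, mul_assoc]
      _ = (∑' n : ℤ, γ ^ e * (γ ^ (((n : ℝ) - μ) ^ 2 - e) * w n))
            / (∑' m : ℤ, γ ^ (((m : ℝ) - μ) ^ 2)) := tsum_div_const
      _ = (γ ^ e * ∑' n : ℤ, γ ^ (((n : ℝ) - μ) ^ 2 - e) * w n)
            / (γ ^ e * ∑' n : ℤ, γ ^ (((n : ℝ) - μ) ^ 2 - e) * 1) := by
          rw [tsum_mul_left, hD]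
      _ = (∑' n : ℤ, γ ^ (((n : ℝ) - μ) ^ 2 - e) * w n)
            / (∑' n : ℤ, γ ^ (((n : ℝ) - μ) ^ 2 - e) * 1) :=
          mul_div_mul_left _ _ hge.ne'
  rw [aux (fun n => (n : ℝ) ^ 2), aux (fun n => (n : ℝ))]
  simp only [Pi.div_apply]

private lemma hasSum_single_ite (μ e : ℝ) (n₀ : ℤ)
    (hiff : ∀ n : ℤ, ((n : ℝ) - μ) ^ 2 = e ↔ n = n₀) (w : ℤ → ℝ) :
    HasSum (fun n : ℤ => if ((n : ℝ) - μ) ^ 2 = e then w n else 0) (w n₀) := by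
  have heq : (fun n : ℤ => if ((n : ℝ) - μ) ^ 2 = e then w n else 0)
      = fun n : ℤ => if n = n₀ then w n₀ else 0 := by
    funext n
    by_cases h : n = n₀
    · subst h; rw [if_pos ((hiff _).mpr rfl), if_pos rfl]
    · rw [if_neg (fun hc => h ((hiff n).mp hc)), if_neg h]
  rw [heq]
  exact hasSum_ite_eq n₀ (w n₀)

private lemma hasSum_pair_ite (μ e : ℝ) (n₀ : ℤ)
    (hiff : ∀ n : ℤ, ((n : ℝ) - μ) ^ 2 = e ↔ (n = n₀ ∨ n = n₀ + 1)) (w : ℤ → ℝ) :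
    HasSum (fun n : ℤ => if ((n : ℝ) - μ) ^ 2 = e then w n else 0)
      (w n₀ + w (n₀ + 1)) := by
  have heq : (fun n : ℤ => if ((n : ℝ) - μ) ^ 2 = e then w n else 0)
      = fun n : ℤ => (if n = n₀ then w n₀ else 0) + (if n = n₀ + 1 then w (n₀ + 1) else 0) := by
    funext n
    by_cases h1 : n = n₀
    · rw [if_pos ((hiff n).mpr (Or.inl h1)), if_pos h1,
        if_neg (by omega : ¬ (n = n₀ + 1)), h1, add_zero]
    · by_cases h2 : n = n₀ + 1
      · rw [if_pos ((hiff n).mpr (Or.inr h2)), if_neg h1, if_pos h2, h2, zero_add]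
      · have hne : ¬ (((n : ℝ) - μ) ^ 2 = e) := fun hc => by
          rcases (hiff n).mp hc with h | h
          exacts [h1 h, h2 h]
        rw [if_neg hne, if_neg h1, if_neg h2, add_zero]
  rw [heq]
  exact (hasSum_ite_eq n₀ (w n₀)).add (hasSum_ite_eq (n₀ + 1) (w (n₀ + 1)))

/-- The variance of the Danorm distribution `p(n) = γ^{(n-μ)²}/∑_m γ^{(m-μ)²}`
on ℤ converges to `0` as `γ → 0⁺` whenever `μ` is not exactly a half-integer;
if `μ - ⌊μ⌋ = 1/2` the variance converges to `1/4`. -/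
theorem danorm_variance_limit (μ : ℝ) :
    (μ - ⌊μ⌋ ≠ 1 / 2 → Tendsto
      (fun γ : ℝ =>
        (∑' n : ℤ,
          (γ ^ (((n : ℝ) - μ) ^ 2) / ∑' m : ℤ, γ ^ (((m : ℝ) - μ) ^ 2)) * (n : ℝ) ^ 2)
        - (∑' n : ℤ,
          (γ ^ (((n : ℝ) - μ) ^ 2) / ∑' m : ℤ, γ ^ (((m : ℝ) - μ) ^ 2)) * (n : ℝ)) ^ 2)
      (𝓝[>] 0) (𝓝 0)) ∧
    (μ - ⌊μ⌋ = 1 / 2 → Tendsto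
      (fun γ : ℝ =>
        (∑' n : ℤ,
          (γ ^ (((n : ℝ) - μ) ^ 2) / ∑' m : ℤ, γ ^ (((m : ℝ) - μ) ^ 2)) * (n : ℝ) ^ 2)
        - (∑' n : ℤ,
          (γ ^ (((n : ℝ) - μ) ^ 2) / ∑' m : ℤ, γ ^ (((m : ℝ) - μ) ^ 2)) * (n : ℝ)) ^ 2)
      (𝓝[>] 0) (𝓝 (1 / 4))) := by
  have hA : ((⌊μ⌋ : ℤ) : ℝ) ≤ μ := Int.floor_le μ
  have hB : μ < ((⌊μ⌋ : ℤ) : ℝ) + 1 := Int.lt_floor_add_one μ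
  constructor
  · intro hne
    rcases lt_or_gt_of_ne hne with hlt | hgt
    · -- nearest integer is ⌊μ⌋
      have he : ∀ n : ℤ, (μ - ((⌊μ⌋ : ℤ) : ℝ)) ^ 2 ≤ ((n : ℝ) - μ) ^ 2 := by
        intro n
        rcases le_or_gt n ⌊μ⌋ with h | h
        · have hn : (n : ℝ) ≤ ((⌊μ⌋ : ℤ) : ℝ) := by exact_mod_cast h
          have key : (μ - ((⌊μ⌋ : ℤ) : ℝ)) * (μ - ((⌊μ⌋ : ℤ) : ℝ)) ≤ (μ - n) * (μ - n) :=
            mul_le_mul (by linarith) (by linarith) (by linarith) (by linarith)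
          nlinarith [key]
        · have hn : ((⌊μ⌋ : ℤ) : ℝ) + 1 ≤ (n : ℝ) := by exact_mod_cast h
          have key : (μ - ((⌊μ⌋ : ℤ) : ℝ)) * (μ - ((⌊μ⌋ : ℤ) : ℝ)) ≤ ((n : ℝ) - μ) * ((n : ℝ) - μ) :=
            mul_le_mul (by linarith) (by linarith) (by linarith) (by linarith)
          nlinarith [key]
      have hiff : ∀ n : ℤ, ((n : ℝ) - μ) ^ 2 = (μ - ((⌊μ⌋ : ℤ) : ℝ)) ^ 2 ↔ n = ⌊μ⌋ := by
        intro n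
        constructor
        · intro hc
          by_contra hn
          rcases lt_or_gt_of_ne hn with h | h
          · have hn' : (n : ℝ) ≤ ((⌊μ⌋ : ℤ) : ℝ) - 1 := by
              have : (n : ℤ) ≤ ⌊μ⌋ - 1 := by omega
              calc (n : ℝ) ≤ ((⌊μ⌋ - 1 : ℤ) : ℝ) := by exact_mod_cast this
                _ = ((⌊μ⌋ : ℤ) : ℝ) - 1 := by push_cast; ring
            have key : (μ - ((⌊μ⌋ : ℤ) : ℝ) + 1) * (μ - ((⌊μ⌋ : ℤ) : ℝ) + 1) ≤ (μ - n) * (μ - n) :=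
              mul_le_mul (by linarith) (by linarith) (by linarith) (by linarith)
            nlinarith [key]
          · have hn' : ((⌊μ⌋ : ℤ) : ℝ) + 1 ≤ (n : ℝ) := by exact_mod_cast h
            have key : (1 - (μ - ((⌊μ⌋ : ℤ) : ℝ))) * (1 - (μ - ((⌊μ⌋ : ℤ) : ℝ)))
                ≤ ((n : ℝ) - μ) * ((n : ℝ) - μ) :=
              mul_le_mul (by linarith) (by linarith) (by linarith) (by linarith)
            nlinarith [key]
        · rintro rfl; ring
      have h := key μ ((μ - ((⌊μ⌋ : ℤ) : ℝ)) ^ 2) he 1 ((⌊μ⌋ : ℤ) : ℝ) (((⌊μ⌋ : ℤ) : ℝ) ^ 2)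
        one_pos
        (hasSum_single_ite μ _ ⌊μ⌋ hiff (fun _ => (1 : ℝ)))
        (hasSum_single_ite μ _ ⌊μ⌋ hiff (fun n => (n : ℝ)))
        (hasSum_single_ite μ _ ⌊μ⌋ hiff (fun n => (n : ℝ) ^ 2))
      have e0 : (((⌊μ⌋ : ℤ) : ℝ) ^ 2) / 1 - ((((⌊μ⌋ : ℤ) : ℝ)) / 1) ^ 2 = 0 := by ring
      rwa [e0] at h
    · -- nearest integer is ⌊μ⌋ + 1
      have he : ∀ n : ℤ, (((⌊μ⌋ : ℤ) : ℝ) + 1 - μ) ^ 2 ≤ ((n : ℝ) - μ) ^ 2 := by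
        intro n
        rcases le_or_gt n ⌊μ⌋ with h | h
        · have hn : (n : ℝ) ≤ ((⌊μ⌋ : ℤ) : ℝ) := by exact_mod_cast h
          have key : (((⌊μ⌋ : ℤ) : ℝ) + 1 - μ) * (((⌊μ⌋ : ℤ) : ℝ) + 1 - μ) ≤ (μ - n) * (μ - n) :=
            mul_le_mul (by linarith) (by linarith) (by linarith) (by linarith)
          nlinarith [key]
        · have hn : ((⌊μ⌋ : ℤ) : ℝ) + 1 ≤ (n : ℝ) := by exact_mod_cast h
          have key : (((⌊μ⌋ : ℤ) : ℝ) + 1 - μ) * (((⌊μ⌋ : ℤ) : ℝ) + 1 - μ)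
              ≤ ((n : ℝ) - μ) * ((n : ℝ) - μ) :=
            mul_le_mul (by linarith) (by linarith) (by linarith) (by linarith)
          nlinarith [key]
      have hiff : ∀ n : ℤ, ((n : ℝ) - μ) ^ 2 = (((⌊μ⌋ : ℤ) : ℝ) + 1 - μ) ^ 2 ↔ n = ⌊μ⌋ + 1 := by
        intro n
        constructor
        · intro hc
          by_contra hn
          rcases lt_or_gt_of_ne hn with h | h
          · have hn' : (n : ℝ) ≤ ((⌊μ⌋ : ℤ) : ℝ) := by
              have : (n : ℤ) ≤ ⌊μ⌋ := by omega
              exact_mod_cast this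
            have key : (μ - ((⌊μ⌋ : ℤ) : ℝ)) * (μ - ((⌊μ⌋ : ℤ) : ℝ)) ≤ (μ - n) * (μ - n) :=
              mul_le_mul (by linarith) (by linarith) (by linarith) (by linarith)
            nlinarith [key]
          · have hn' : ((⌊μ⌋ : ℤ) : ℝ) + 2 ≤ (n : ℝ) := by
              have : (⌊μ⌋ + 2 : ℤ) ≤ n := by omega
              calc ((⌊μ⌋ : ℤ) : ℝ) + 2 = ((⌊μ⌋ + 2 : ℤ) : ℝ) := by push_cast; ring
                _ ≤ (n : ℝ) := by exact_mod_cast this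
            have key : (2 - (μ - ((⌊μ⌋ : ℤ) : ℝ))) * (2 - (μ - ((⌊μ⌋ : ℤ) : ℝ)))
                ≤ ((n : ℝ) - μ) * ((n : ℝ) - μ) :=
              mul_le_mul (by linarith) (by linarith) (by linarith) (by linarith)
            nlinarith [key]
        · rintro rfl; push_cast; ring
      have h := key μ ((((⌊μ⌋ : ℤ) : ℝ) + 1 - μ) ^ 2) he 1 (((⌊μ⌋ + 1 : ℤ) : ℝ))
        ((((⌊μ⌋ + 1 : ℤ) : ℝ)) ^ 2) one_pos
        (hasSum_single_ite μ _ (⌊μ⌋ + 1) hiff (fun _ => (1 : ℝ)))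
        (hasSum_single_ite μ _ (⌊μ⌋ + 1) hiff (fun n => (n : ℝ)))
        (hasSum_single_ite μ _ (⌊μ⌋ + 1) hiff (fun n => (n : ℝ) ^ 2))
      have e0 : ((((⌊μ⌋ + 1 : ℤ) : ℝ)) ^ 2) / 1 - (((⌊μ⌋ + 1 : ℤ) : ℝ) / 1) ^ 2 = 0 := by ring
      rwa [e0] at h
  · intro hhalf
    have he : ∀ n : ℤ, (1 / 4 : ℝ) ≤ ((n : ℝ) - μ) ^ 2 := by
      intro n
      rcases le_or_gt n ⌊μ⌋ with h | h
      · have hn : (n : ℝ) ≤ ((⌊μ⌋ : ℤ) : ℝ) := by exact_mod_cast h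
        have key : (1 / 2 : ℝ) * (1 / 2) ≤ (μ - n) * (μ - n) :=
          mul_le_mul (by linarith) (by linarith) (by linarith) (by linarith)
        nlinarith [key]
      · have hn : ((⌊μ⌋ : ℤ) : ℝ) + 1 ≤ (n : ℝ) := by exact_mod_cast h
        have key : (1 / 2 : ℝ) * (1 / 2) ≤ ((n : ℝ) - μ) * ((n : ℝ) - μ) :=
          mul_le_mul (by linarith) (by linarith) (by linarith) (by linarith)
        nlinarith [key]
    have hiff : ∀ n : ℤ, ((n : ℝ) - μ) ^ 2 = (1 / 4 : ℝ) ↔ (n = ⌊μ⌋ ∨ n = ⌊μ⌋ + 1) := by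
      intro n
      constructor
      · intro hc
        by_contra hn
        push_neg at hn
        have : (n : ℤ) ≤ ⌊μ⌋ - 1 ∨ (⌊μ⌋ + 2 : ℤ) ≤ n := by omega
        rcases this with h | h
        · have hn' : (n : ℝ) ≤ ((⌊μ⌋ : ℤ) : ℝ) - 1 := by
            calc (n : ℝ) ≤ ((⌊μ⌋ - 1 : ℤ) : ℝ) := by exact_mod_cast h
              _ = ((⌊μ⌋ : ℤ) : ℝ) - 1 := by push_cast; ring
          have key : (3 / 2 : ℝ) * (3 / 2) ≤ (μ - n) * (μ - n) :=
            mul_le_mul (by linarith) (by linarith) (by linarith) (by linarith)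
          nlinarith [key]
        · have hn' : ((⌊μ⌋ : ℤ) : ℝ) + 2 ≤ (n : ℝ) := by
            calc ((⌊μ⌋ : ℤ) : ℝ) + 2 = ((⌊μ⌋ + 2 : ℤ) : ℝ) := by push_cast; ring
              _ ≤ (n : ℝ) := by exact_mod_cast h
          have key : (3 / 2 : ℝ) * (3 / 2) ≤ ((n : ℝ) - μ) * ((n : ℝ) - μ) :=
            mul_le_mul (by linarith) (by linarith) (by linarith) (by linarith)
          nlinarith [key]
      · rintro (rfl | rfl)
        · nlinarith [hhalf]
        · push_cast
          nlinarith [hhalf]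
    have h := key μ (1 / 4 : ℝ) he (1 + 1)
      (((⌊μ⌋ : ℤ) : ℝ) + ((⌊μ⌋ + 1 : ℤ) : ℝ))
      (((⌊μ⌋ : ℤ) : ℝ) ^ 2 + (((⌊μ⌋ + 1 : ℤ) : ℝ)) ^ 2)
      (by norm_num)
      (hasSum_pair_ite μ _ ⌊μ⌋ hiff (fun _ => (1 : ℝ)))
      (hasSum_pair_ite μ _ ⌊μ⌋ hiff (fun n => (n : ℝ)))
      (hasSum_pair_ite μ _ ⌊μ⌋ hiff (fun n => (n : ℝ) ^ 2))
    have e0 : (((⌊μ⌋ : ℤ) : ℝ) ^ 2 + (((⌊μ⌋ + 1 : ℤ) : ℝ)) ^ 2) / (1 + 1)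
        - ((((⌊μ⌋ : ℤ) : ℝ) + ((⌊μ⌋ + 1 : ℤ) : ℝ)) / (1 + 1)) ^ 2 = 1 / 4 := by
      push_cast; ring
    rwa [e0] at h
end
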